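/- Let P be a program over 𝒰 and A, B ⊆ 𝒰. If P satisfies criterion Ω_{A,B}, then no B-relativized A-simplification of P exists (P is not B-relativized A-simplifiable). -/

import Mathlib

/-- An extended rule over a type of atoms: head, positive body, negative body,
double-negated body. -/
structure ASPRule (Atom : Type) where
  head : Finset Atom
  pos : Finset Atom
  neg : Finset Atom
  nneg : Finset Atom
deriving DecidableEq

/-- A program is a finite set of rules. -/
abbrev ASPProgram (Atom : Type) [DecidableEq Atom] := Finset (ASPRule Atom)

section Defs

variable {Atom : Type} [DecidableEq Atom] [Fintype Atom]

/-- A rule is over `S` if all its atoms lie in `S`. -/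
def ruleOver (r : ASPRule Atom) (S : Finset Atom) : Prop :=
  r.head ⊆ S ∧ r.pos ⊆ S ∧ r.neg ⊆ S ∧ r.nneg ⊆ S

/-- A program is over `S` if all its rules are over `S`. -/
def progOver (P : ASPProgram Atom) (S : Finset Atom) : Prop :=
  ∀ r ∈ P, ruleOver r S

/-- `I` satisfies (is a model of) rule `r`. -/
def satRule (I : Finset Atom) (r : ASPRule Atom) : Prop :=
  ((r.head ∪ r.neg) ∩ I).Nonempty ∨ ¬ (r.pos ∪ r.nneg ⊆ I)

/-- `I` is a model of program `P`. -/
def sat (I : Finset Atom) (P : ASPProgram Atom) : Prop :=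
  ∀ r ∈ P, satRule I r

/-- The GL-reduct `P^I`. -/
def reduct (P : ASPProgram Atom) (I : Finset Atom) : ASPProgram Atom :=
  (P.filter (fun r => r.neg ∩ I = ∅ ∧ r.nneg ⊆ I)).image
    (fun r => ⟨r.head, r.pos, ∅, ∅⟩)

/-- The answer sets of `P`: minimal models of the reduct. -/
def AS (P : ASPProgram Atom) : Set (Finset Atom) :=
  {I | sat I (reduct P I) ∧ ∀ J ⊂ I, ¬ sat J (reduct P I)}

/-- Projection of a program onto `𝒰 ∖ A`: rules with a head or negative-body atom
from `A` are dropped; in the remaining rules the atoms of `A` are removed from the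
positive and double-negated bodies. -/
def projAway (P : ASPProgram Atom) (A : Finset Atom) : ASPProgram Atom :=
  (P.filter (fun r => r.neg ∩ A = ∅ ∧ r.head ∩ A = ∅)).image
    (fun r => ⟨r.head, r.pos \ A, r.neg, r.nneg \ A⟩)

/-- `R` is `A`-separated: a union of a program over `𝒰 ∖ A` and a program over `A`. -/
def ASeparated (R : ASPProgram Atom) (A : Finset Atom) : Prop :=
  ∃ R₁ R₂ : ASPProgram Atom, R = R₁ ∪ R₂ ∧ progOver R₁ Aᶜ ∧ progOver R₂ A

/-- The defining equation of a (strong) `A`-simplification of `P` relative to `B`: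
`AS(P ∪ R)_{|Ā} = AS(Q ∪ R_{|Ā})` for every `A`-separated program `R` over `B`. -/
def SimpEq (P : ASPProgram Atom) (A B : Finset Atom) (Q : ASPProgram Atom) : Prop :=
  ∀ R : ASPProgram Atom, progOver R B → ASeparated R A →
    (fun I => I \ A) '' AS (P ∪ R) = AS (Q ∪ projAway R A)

/-- The SE-models of `P`. -/
def SE (P : ASPProgram Atom) : Set (Finset Atom × Finset Atom) :=
  {p | p.1 ⊆ p.2 ∧ sat p.2 P ∧ sat p.1 (reduct P p.2)}

/-- The (relativized) `B`-SE-models of `P`. -/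
def SEB (B : Finset Atom) (P : ASPProgram Atom) : Set (Finset Atom × Finset Atom) :=
  {p | (p.1 = p.2 ∨ p.1 ⊂ p.2 ∩ B) ∧ sat p.2 P ∧
    (∀ Y' ⊂ p.2, Y' ∩ B = p.2 ∩ B → ¬ sat Y' (reduct P p.2)) ∧
    (p.1 ⊂ p.2 → ∃ X' ⊆ p.2, X' ∩ B = p.1 ∧ sat X' (reduct P p.2))}

/-- `SE^{A₁,A₂}(P)`: the `A₂`-SE-models `⟨X,Y⟩` of `P` with `Y ⊆ A₁`. -/
def SERel (P : ASPProgram Atom) (A₁ A₂ : Finset Atom) : Set (Finset Atom × Finset Atom) :=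
  {p | p ∈ SEB A₂ P ∧ p.2 ⊆ A₁}

/-- `P` satisfies `Δʳ` for `A`, `B`. -/
def DeltaR (P : ASPProgram Atom) (A B : Finset Atom) : Prop :=
  (∀ Y : Finset Atom, (Y, Y) ∈ SEB B P → A ∩ B ⊆ Y) ∧
  (∀ X Y : Finset Atom, (X, Y) ∈ SE P → (Y, Y) ∈ SEB B P → X \ A = Y \ A → X = Y) ∧
  (∀ X Y : Finset Atom, (X, Y) ∈ SEB B P → (X ∪ (Y ∩ A ∩ B), Y) ∈ SEB B P)

/-- The family `𝓡^Y_{⟨P,A,B⟩}`. -/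
def RFam (P : ASPProgram Atom) (A B Y : Finset Atom) : Set (Set (Finset Atom)) :=
  {S | ∃ A' ⊆ A, (Y ∪ A', Y ∪ A') ∈ SEB B P ∧
    S = {Z | ∃ X : Finset Atom, (X, Y ∪ A') ∈ SEB B P ∧ Z = X \ A}}

/-- `P` satisfies criterion `Ω_{A,B}`: for some `Y ⊆ 𝒰 ∖ A` the family
`𝓡^Y_{⟨P,A,B⟩}` is non-empty and has no `⊆`-least element. -/
def OmegaCrit (P : ASPProgram Atom) (A B : Finset Atom) : Prop :=
  ∃ Y : Finset Atom, Y ⊆ Aᶜ ∧ (RFam P A B Y).Nonempty ∧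
    ¬ ∃ S ∈ RFam P A B Y, ∀ T ∈ RFam P A B Y, S ⊆ T

/-- `⋂ 𝓡^Y_{⟨P,A,B⟩}`, taken to be `∅` when the family is empty. -/
def RInter (P : ASPProgram Atom) (A B Y : Finset Atom) : Set (Finset Atom) :=
  {X | (RFam P A B Y).Nonempty ∧ ∀ S ∈ RFam P A B Y, X ∈ S}

/-- The `A`-`B`-SE-models `SE^B_A(P)` of `P`. -/
def SEBA (P : ASPProgram Atom) (A B : Finset Atom) : Set (Finset Atom × Finset Atom) :=
  {p | ∃ Y : Finset Atom, (Y, Y) ∈ SEB B P ∧ p = (Y \ A, Y \ A)} ∪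
  {p | ∃ X Y : Finset Atom, (X, Y) ∈ SEB B P ∧ X ⊂ Y ∧
    (∀ Y' : Finset Atom, (Y', Y') ∈ SEB B P → Y' \ A = Y \ A →
      ∃ X' : Finset Atom, (X', Y') ∈ SEB B P ∧ X' \ A = X \ A) ∧
    p = (X \ A, Y \ A)}

end Defs

/-!
Let `Q` be a `B`-relativized `A`-simplification of `P` and `Y ⊆ 𝒰 ∖ A`. Contexts that forbid
some traces on `Y ∩ B` by positive rules lie over `B ∖ A`, so the simplification transports
answer sets through them in both directions, and answer sets of `P ∪ R` are read off the
`B`-SE-models of `P`. Comparing both sides, every `B`-SE-model `⟨Z, Y⟩` of `Q` has `Z` in every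
member of `𝓡^Y`. Forbidding exactly the proper traces common to all members of `𝓡^Y` then
keeps `Y` an answer set on the side of `Q`, hence yields an answer set `W` of `P ∪ R` with
`W ∖ A = Y`, and the member of `𝓡^Y` coming from `W` is contained in all others. So `𝓡^Y` is
empty or has a least element, which is the negation of `Ω_{A,B}`.
-/

section Semantics

variable {Atom : Type} [DecidableEq Atom]

lemma sat_union {I : Finset Atom} {P R : ASPProgram Atom} :
    sat I (P ∪ R) ↔ sat I P ∧ sat I R := by
  simp only [sat, Finset.mem_union, or_imp, forall_and]

lemma reduct_union (P R : ASPProgram Atom) (I : Finset Atom) :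
    reduct (P ∪ R) I = reduct P I ∪ reduct R I := by
  simp only [reduct, Finset.filter_union, Finset.image_union]

lemma sat_reduct {I J : Finset Atom} {P : ASPProgram Atom} :
    sat I (reduct P J) ↔
      ∀ r ∈ P, r.neg ∩ J = ∅ → r.nneg ⊆ J → (r.head ∩ I).Nonempty ∨ ¬ r.pos ⊆ I := by
  simp only [sat, reduct, Finset.forall_mem_image, Finset.mem_filter, and_imp, satRule,
    Finset.union_empty]

lemma sat_reduct_self {I : Finset Atom} {P : ASPProgram Atom} :
    sat I (reduct P I) ↔ sat I P := by
  rw [sat_reduct]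
  refine forall₂_congr fun r _ => ?_
  simp only [satRule, Finset.union_inter_distrib_right, Finset.union_nonempty,
    Finset.union_subset_iff, ← Finset.not_nonempty_iff_eq_empty]
  tauto

lemma satRule_inter_of_ruleOver {I S : Finset Atom} {r : ASPRule Atom} (hr : ruleOver r S) :
    satRule (I ∩ S) r ↔ satRule I r := by
  obtain ⟨hh, hp, hn, hnn⟩ := hr
  have hbody : (r.head ∪ r.neg) ∩ (I ∩ S) = (r.head ∪ r.neg) ∩ I := by
    rw [Finset.inter_comm I, ← Finset.inter_assoc,
      Finset.inter_eq_left.mpr (Finset.union_subset hh hn)]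
  simp only [satRule, hbody, Finset.subset_inter_iff, Finset.union_subset hp hnn, and_true]

lemma sat_congr_of_progOver {I₁ I₂ S : Finset Atom} {R : ASPProgram Atom} (hR : progOver R S)
    (h : I₁ ∩ S = I₂ ∩ S) : sat I₁ R ↔ sat I₂ R :=
  forall₂_congr fun r hr => by
    rw [← satRule_inter_of_ruleOver (hR r hr), h, satRule_inter_of_ruleOver (hR r hr)]

lemma progOver_reduct {R : ASPProgram Atom} {S : Finset Atom} (hR : progOver R S)
    (I : Finset Atom) : progOver (reduct R I) S := by
  simp only [progOver, reduct, Finset.mem_image, Finset.mem_filter]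
  rintro _ ⟨r, ⟨hr, -⟩, rfl⟩
  obtain ⟨hh, hp, -, -⟩ := hR r hr
  exact ⟨hh, hp, Finset.empty_subset _, Finset.empty_subset _⟩

end Semantics

section AnswerSets

variable {Atom : Type} [DecidableEq Atom] {P R : ASPProgram Atom} {B W : Finset Atom}

lemma mem_SEB_self_iff :
    (W, W) ∈ SEB B P ↔ sat W P ∧ ∀ Y ⊂ W, Y ∩ B = W ∩ B → ¬ sat Y (reduct P W) := by
  simp [SEB]

lemma exists_extension_of_mem_SEB {X : Finset Atom} (h : (X, W) ∈ SEB B P) (hX : X ⊂ W ∩ B) :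
    ∃ X' ⊆ W, X' ∩ B = X ∧ sat X' (reduct P W) :=
  h.2.2.2 (hX.trans_le Finset.inter_subset_left)

lemma mem_SEB_inter {J : Finset Atom} (hW : (W, W) ∈ SEB B P) (hJ : J ⊆ W)
    (hJB : J ∩ B ⊂ W ∩ B) (hJP : sat J (reduct P W)) : (J ∩ B, W) ∈ SEB B P :=
  ⟨Or.inr hJB, hW.2.1, hW.2.2.1, fun _ => ⟨J, hJ, rfl, hJP⟩⟩

lemma mem_AS_union_iff (hR : progOver R B) :
    W ∈ AS (P ∪ R) ↔ (W, W) ∈ SEB B P ∧ sat W R ∧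
      ∀ X, (X, W) ∈ SEB B P → X ⊂ W ∩ B → ¬ sat X (reduct R W) := by
  have hcongr {J K : Finset Atom} (h : J ∩ B = K ∩ B) :
      sat J (reduct R W) ↔ sat K (reduct R W) :=
    sat_congr_of_progOver (progOver_reduct hR W) h
  simp only [AS, Set.mem_ofPred_eq, reduct_union, sat_union, sat_reduct_self, mem_SEB_self_iff]
  constructor
  · rintro ⟨⟨hWP, hWR⟩, hmin⟩
    refine ⟨⟨hWP, fun Y hY hYB hYP =>
      hmin Y hY ⟨hYP, (hcongr hYB).mpr (sat_reduct_self.mpr hWR)⟩⟩, hWR, ?_⟩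
    intro X hXW hX hXR
    obtain ⟨X', hX'W, hX'B, hX'P⟩ := exists_extension_of_mem_SEB hXW hX
    have hX'B' : X' ∩ B = X ∩ B := by
      rw [hX'B, Finset.inter_eq_left.mpr (hX.le.trans Finset.inter_subset_right)]
    refine hmin X' (hX'W.ssubset_of_ne ?_) ⟨hX'P, (hcongr hX'B').mpr hXR⟩
    rintro rfl
    exact hX.ne hX'B.symm
  · rintro ⟨⟨hWP, hWmin⟩, hWR, hkill⟩
    refine ⟨⟨hWP, hWR⟩, fun J hJ ⟨hJP, hJR⟩ => ?_⟩
    by_cases hJB : J ∩ B = W ∩ B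
    · exact hWmin J hJ hJB hJP
    · have hJB' : J ∩ B ⊂ W ∩ B :=
        (Finset.inter_subset_inter_right hJ.le).ssubset_of_ne hJB
      refine hkill _ (mem_SEB_inter ?_ hJ.le hJB' hJP) hJB' ?_
      · exact mem_SEB_self_iff.mpr ⟨hWP, hWmin⟩
      · exact (hcongr (by rw [Finset.inter_assoc, Finset.inter_self])).mpr hJR

end AnswerSets

section ForbiddenTraces

variable {Atom : Type} [DecidableEq Atom]

/-- The positive rules `C ∖ N ← N` for `N ∈ 𝒩`; the rule for `N` rejects exactly the
interpretations whose trace on `C` is `N`. -/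
def forbidTraces (C : Finset Atom) (𝒩 : Finset (Finset Atom)) : ASPProgram Atom :=
  𝒩.image fun N => ⟨C \ N, N, ∅, ∅⟩

variable {C : Finset Atom} {𝒩 : Finset (Finset Atom)}

lemma sat_forbidTraces {X : Finset Atom} (h𝒩 : ∀ N ∈ 𝒩, N ⊆ C) :
    sat X (forbidTraces C 𝒩) ↔ X ∩ C ∉ 𝒩 := by
  simp only [sat, forbidTraces, Finset.forall_mem_image, satRule, Finset.union_empty]
  constructor
  · intro h hX
    rcases h hX with ⟨x, hx⟩ | hsub
    · simp at hx
    · exact hsub Finset.inter_subset_left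
  · intro h N hN
    by_cases hNX : N ⊆ X
    · have hNXC : N ⊂ X ∩ C :=
        (Finset.subset_inter hNX (h𝒩 N hN)).ssubset_of_ne fun e => h (e ▸ hN)
      obtain ⟨x, hxXC, hxN⟩ := Finset.exists_of_ssubset hNXC
      exact Or.inl ⟨x, by simp_all⟩
    · exact Or.inr hNX

lemma reduct_forbidTraces (I : Finset Atom) :
    reduct (forbidTraces C 𝒩) I = forbidTraces C 𝒩 := by
  ext r
  simp [reduct, forbidTraces]

lemma progOver_forbidTraces {S : Finset Atom} (hC : C ⊆ S) (h𝒩 : ∀ N ∈ 𝒩, N ⊆ C) :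
    progOver (forbidTraces C 𝒩) S := by
  simp only [progOver, forbidTraces, Finset.forall_mem_image]
  exact fun N hN => ⟨Finset.sdiff_subset.trans hC, (h𝒩 N hN).trans hC,
    Finset.empty_subset _, Finset.empty_subset _⟩

lemma projAway_union (P R : ASPProgram Atom) (A : Finset Atom) :
    projAway (P ∪ R) A = projAway P A ∪ projAway R A := by
  simp only [projAway, Finset.filter_union, Finset.image_union]

lemma projAway_eq_self [Fintype Atom] {R : ASPProgram Atom} {A : Finset Atom}
    (hR : progOver R Aᶜ) : projAway R A = R := by
  have hdisj {s : Finset Atom} (hs : s ⊆ Aᶜ) : Disjoint s A :=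
    Finset.subset_compl_iff_disjoint_right.mp hs
  have hkeep (r) (hr : r ∈ R) : r.neg ∩ A = ∅ ∧ r.head ∩ A = ∅ :=
    ⟨Finset.disjoint_iff_inter_eq_empty.mp (hdisj (hR r hr).2.2.1),
      Finset.disjoint_iff_inter_eq_empty.mp (hdisj (hR r hr).1)⟩
  have hfix (r) (hr : r ∈ R) : (⟨r.head, r.pos \ A, r.neg, r.nneg \ A⟩ : ASPRule Atom) = r := by
    rw [Finset.sdiff_eq_self_of_disjoint (hdisj (hR r hr).2.1),
      Finset.sdiff_eq_self_of_disjoint (hdisj (hR r hr).2.2.2)]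
  rw [projAway, Finset.filter_true_of_mem hkeep, Finset.image_congr hfix, Finset.image_id']

lemma projAway_forbidTraces_eq_empty {A : Finset Atom} (hC : C ⊆ A) (h𝒩 : ∀ N ∈ 𝒩, N ⊂ C) :
    projAway (forbidTraces C 𝒩) A = ∅ := by
  simp only [projAway, forbidTraces, Finset.image_eq_empty, Finset.filter_eq_empty_iff,
    Finset.forall_mem_image]
  rintro N hN ⟨-, hhead⟩
  obtain ⟨x, hxC, hxN⟩ := Finset.exists_of_ssubset (h𝒩 N hN)
  exact Finset.notMem_empty x (hhead ▸ by simp [hxC, hxN, hC hxC])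

end ForbiddenTraces

section Simplification

variable {Atom : Type} [DecidableEq Atom] {P Q R : ASPProgram Atom} {A B C W Y : Finset Atom}
  {𝒩 : Finset (Finset Atom)}

lemma sdiff_eq_inter_of_subset_inter {X : Finset Atom} (hX : X ⊆ W ∩ B) :
    X \ A = X ∩ (W \ A ∩ B) := by
  ext x
  have := @hX x
  simp only [Finset.mem_sdiff, Finset.mem_inter] at this ⊢
  tauto

lemma mem_AS_union_forbidTraces_iff (hCB : C ⊆ B) (hCW : C ⊆ W) (h𝒩 : ∀ N ∈ 𝒩, N ⊂ C) :
    W ∈ AS (P ∪ forbidTraces C 𝒩) ↔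
      (W, W) ∈ SEB B P ∧ ∀ X, (X, W) ∈ SEB B P → X ⊂ W ∩ B → X ∩ C ∈ 𝒩 := by
  have h𝒩' : ∀ N ∈ 𝒩, N ⊆ C := fun N hN => (h𝒩 N hN).le
  have hC : C ∉ 𝒩 := fun hC => (h𝒩 C hC).ne rfl
  rw [mem_AS_union_iff (progOver_forbidTraces hCB h𝒩'), reduct_forbidTraces]
  simp only [sat_forbidTraces h𝒩', Finset.inter_eq_right.mpr hCW, not_not, hC, not_false_eq_true,
    true_and]

variable [Fintype Atom]

lemma mem_RFam_iff {T : Set (Finset Atom)} (hY : Y ⊆ Aᶜ) :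
    T ∈ RFam P A B Y ↔ ∃ W, W \ A = Y ∧ (W, W) ∈ SEB B P ∧
      T = {Z | ∃ X, (X, W) ∈ SEB B P ∧ Z = X \ A} := by
  constructor
  · rintro ⟨A', hA', hW, rfl⟩
    refine ⟨Y ∪ A', ?_, hW, rfl⟩
    rw [Finset.union_sdiff_distrib, Finset.sdiff_eq_self_of_disjoint
      (Finset.subset_compl_iff_disjoint_right.mp hY), Finset.sdiff_eq_empty_iff_subset.mpr hA',
      Finset.union_empty]
  · rintro ⟨W, rfl, hW, rfl⟩
    refine ⟨W ∩ A, Finset.inter_subset_right, ?_⟩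
    rw [Finset.sdiff_union_inter]
    exact ⟨hW, rfl⟩

lemma mem_of_mem_RFam {T : Set (Finset Atom)} (hY : Y ⊆ Aᶜ) (hT : T ∈ RFam P A B Y) : Y ∈ T := by
  obtain ⟨W, hWY, hW, rfl⟩ := (mem_RFam_iff hY).mp hT
  exact ⟨W, hW, hWY.symm⟩

namespace SimpEq

lemma image_AS_eq (hsimp : SimpEq P A B Q) (hRB : progOver R B) (hRA : progOver R Aᶜ) :
    (· \ A) '' AS (P ∪ R) = AS (Q ∪ R) := by
  have hsep : ASeparated R A :=
    ⟨R, ∅, (Finset.union_empty R).symm, hRA, fun _ h => absurd h (Finset.notMem_empty _)⟩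
  rw [hsimp R hRB hsep, projAway_eq_self hRA]

/-- The witness context adds to `forbidTraces (Y ∩ B) 𝒩` the facts of `W ∩ A ∩ B`, written
as a `forbidTraces` program over `A`, which the projection onto `Aᶜ` erases. -/
lemma mem_AS_forbidTraces (hsimp : SimpEq P A B Q) (hWY : W \ A = Y) (hW : (W, W) ∈ SEB B P)
    (h𝒩 : ∀ N ∈ 𝒩, N ⊂ Y ∩ B)
    (hX : ∀ X, (X, W) ∈ SEB B P → X ⊂ W ∩ B → X \ A ⊂ Y ∩ B → X \ A ∈ 𝒩) :
    Y ∈ AS (Q ∪ forbidTraces (Y ∩ B) 𝒩) := by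
  subst hWY
  set C := W \ A ∩ B
  set D := W ∩ A ∩ B
  have h𝒩' : ∀ N ∈ 𝒩, N ⊆ C := fun N hN => (h𝒩 N hN).le
  have hD : ∀ N ∈ D.ssubsets, N ⊆ D := fun N hN => (Finset.mem_ssubsets.mp hN).le
  have hCA : C ⊆ Aᶜ :=
    Finset.inter_subset_left.trans <|
      Finset.subset_compl_iff_disjoint_right.mpr Finset.sdiff_disjoint
  have hDA : D ⊆ A := Finset.inter_subset_left.trans Finset.inter_subset_right
  set R := forbidTraces C 𝒩 ∪ forbidTraces D D.ssubsets
  have hRB : progOver R B := fun r hr => by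
    rcases Finset.mem_union.mp hr with hr | hr
    exacts [progOver_forbidTraces Finset.inter_subset_right h𝒩' r hr,
      progOver_forbidTraces Finset.inter_subset_right hD r hr]
  have hRsep : ASeparated R A :=
    ⟨_, _, rfl, progOver_forbidTraces hCA h𝒩', progOver_forbidTraces hDA hD⟩
  have hproj : projAway R A = forbidTraces C 𝒩 := by
    rw [projAway_union, projAway_eq_self (progOver_forbidTraces hCA h𝒩'),
      projAway_forbidTraces_eq_empty hDA fun N hN => Finset.mem_ssubsets.mp hN, Finset.union_empty]
  have hWB : W ∩ B = C ∪ D := by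
    rw [← Finset.union_inter_distrib_right, Finset.sdiff_union_inter]
  rw [← hproj, ← hsimp R hRB hRsep]
  refine ⟨W, ?_, rfl⟩
  rw [mem_AS_union_iff hRB]
  simp only [R, reduct_union, reduct_forbidTraces, sat_union, sat_forbidTraces h𝒩',
    sat_forbidTraces hD, Finset.mem_ssubsets]
  refine ⟨hW, ⟨?_, ?_⟩, ?_⟩
  · rw [Finset.inter_eq_right.mpr (Finset.inter_subset_left.trans Finset.sdiff_subset)]
    exact fun hC => (h𝒩 C hC).ne rfl
  · rw [Finset.inter_eq_right.mpr (Finset.inter_subset_left.trans Finset.inter_subset_left)]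
    exact lt_irrefl D
  · rintro X hXW hXB ⟨hXC, hXD⟩
    have hXA : X \ A = X ∩ C := sdiff_eq_inter_of_subset_inter hXB.le
    have hDX : D ⊆ X := Finset.inter_eq_right.mp <| not_not.mp fun hne =>
      hXD (Finset.inter_subset_right.ssubset_of_ne hne)
    refine hXC (hXA ▸ hX X hXW hXB (hXA ▸ Finset.inter_subset_right.ssubset_of_ne fun hXC => ?_))
    exact hXB.ne (hXB.le.antisymm (hWB ▸ Finset.union_subset (Finset.inter_eq_right.mp hXC) hDX))

lemma SEB_self (hsimp : SimpEq P A B Q) (hY : Y ⊆ Aᶜ) (hne : (RFam P A B Y).Nonempty) :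
    (Y, Y) ∈ SEB B Q := by
  obtain ⟨T, hT⟩ := hne
  obtain ⟨W, hWY, hW, -⟩ := (mem_RFam_iff hY).mp hT
  have hC : ∀ N ∈ (Y ∩ B).ssubsets, N ⊂ Y ∩ B := fun N hN => Finset.mem_ssubsets.mp hN
  have hYQ := hsimp.mem_AS_forbidTraces hWY hW hC fun X _ _ hX => Finset.mem_ssubsets.mpr hX
  exact ((mem_AS_union_forbidTraces_iff Finset.inter_subset_right Finset.inter_subset_left
    hC).mp hYQ).1

/-- Were `Z ∉ T`, forbidding every proper trace on `Y ∩ B` other than `Z` would keep the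
answer set of `P` behind `T` but kill `(Z, Y)` as a countermodel on the side of `Q`. -/
lemma mem_of_mem_SEB {Z : Finset Atom} {T : Set (Finset Atom)} (hsimp : SimpEq P A B Q)
    (hY : Y ⊆ Aᶜ) (hZ : (Z, Y) ∈ SEB B Q) (hT : T ∈ RFam P A B Y) : Z ∈ T := by
  obtain rfl | hZC : Z = Y ∨ Z ⊂ Y ∩ B := hZ.1
  · exact mem_of_mem_RFam hY hT
  obtain ⟨W, hWY, hW, rfl⟩ := (mem_RFam_iff hY).mp hT
  by_contra hZT
  have h𝒩 : ∀ N ∈ (Y ∩ B).ssubsets.erase Z, N ⊂ Y ∩ B := fun N hN =>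
    Finset.mem_ssubsets.mp (Finset.mem_of_mem_erase hN)
  have hYQ := hsimp.mem_AS_forbidTraces hWY hW h𝒩 fun X hXW _ hX =>
    Finset.mem_erase.mpr ⟨fun hXZ => hZT ⟨X, hXW, hXZ.symm⟩, Finset.mem_ssubsets.mpr hX⟩
  have hZ𝒩 := ((mem_AS_union_forbidTraces_iff Finset.inter_subset_right Finset.inter_subset_left
    h𝒩).mp hYQ).2 Z hZ hZC
  rw [Finset.inter_eq_left.mpr hZC.le] at hZ𝒩
  exact Finset.notMem_erase Z _ hZ𝒩

lemma exists_least_RFam (hsimp : SimpEq P A B Q) (hY : Y ⊆ Aᶜ)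
    (hne : (RFam P A B Y).Nonempty) :
    ∃ S ∈ RFam P A B Y, ∀ T ∈ RFam P A B Y, S ⊆ T := by
  classical
  set C := Y ∩ B
  set 𝒩 := C.ssubsets.filter fun N => ∀ T ∈ RFam P A B Y, N ∈ T
  have h𝒩 : ∀ N ∈ 𝒩, N ⊂ C := fun N hN => Finset.mem_ssubsets.mp (Finset.mem_filter.mp hN).1
  have hCB : C ⊆ B := Finset.inter_subset_right
  have hYQ : Y ∈ AS (Q ∪ forbidTraces C 𝒩) := by
    refine (mem_AS_union_forbidTraces_iff hCB Finset.inter_subset_left h𝒩).mpr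
      ⟨hsimp.SEB_self hY hne, fun X hX hXC => ?_⟩
    rw [Finset.inter_eq_left.mpr hXC.le]
    exact Finset.mem_filter.mpr
      ⟨Finset.mem_ssubsets.mpr hXC, fun T hT => hsimp.mem_of_mem_SEB hY hX hT⟩
  have hRA : progOver (forbidTraces C 𝒩) Aᶜ :=
    progOver_forbidTraces (Finset.inter_subset_left.trans hY) fun N hN => (h𝒩 N hN).le
  rw [← hsimp.image_AS_eq (progOver_forbidTraces hCB fun N hN => (h𝒩 N hN).le) hRA] at hYQ
  obtain ⟨W, hWP, hWY : W \ A = Y⟩ := hYQ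
  have hCW : C ⊆ W := Finset.inter_subset_left.trans (hWY ▸ Finset.sdiff_subset)
  obtain ⟨hW, hkill⟩ := (mem_AS_union_forbidTraces_iff hCB hCW h𝒩).mp hWP
  refine ⟨_, (mem_RFam_iff hY).mpr ⟨W, hWY, hW, rfl⟩, ?_⟩
  rintro T hT _ ⟨X, hXW, rfl⟩
  obtain rfl | hX : X = W ∨ X ⊂ W ∩ B := hXW.1
  · exact hWY ▸ mem_of_mem_RFam hY hT
  · rw [sdiff_eq_inter_of_subset_inter hX.le, hWY]
    exact (Finset.mem_filter.mp (hkill X hXW hX)).2 T hT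

end SimpEq

end Simplification

/-- if `P` satisfies `Ω_{A,B}`, no `B`-relativized `A`-simplification
of `P` exists. -/
theorem stmt6 {Atom : Type} [DecidableEq Atom] [Fintype Atom]
    (P : ASPProgram Atom) (A B : Finset Atom) (h : OmegaCrit P A B) :
    ¬ ∃ Q : ASPProgram Atom, progOver Q Aᶜ ∧ SimpEq P A B Q := by
  rintro ⟨Q, -, hsimp⟩
  obtain ⟨Y, hY, hne, hnoLeast⟩ := h
  exact hnoLeast (hsimp.exists_least_RFam hY hne)
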